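/- Let m ≤ d be positive integers, let Y be a d×m random matrix with independent entries, each sub-Gaussian with moment B, let Σ be a d×d diagonal positive semidefinite matrix with Σ ≤ I_d, and let x ∈ ℝ^m be a unit vector. Then for every z ≥ 0, P[‖√Σ · Y x‖₂ ≥ z] ≤ exp(trace(Σ)/2 − z²/(4B²)). -/

import Mathlib

/-!
Each row sum `Vᵢ = ∑ⱼ Yᵢⱼ xⱼ` is sub-Gaussian with variance proxy `B²`, because `‖x‖₂ = 1`, and
the row sums are independent. For `V` sub-Gaussian with proxy `c`, writing `exp (t V²)` as a
Gaussian average of `exp (√(2t) V u)` over `u` gives `E exp (t V²) ≤ (1 - 2ct)^(-1/2)`; at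
`t = λ / (4c)` with `λ ∈ [0, 1]` this is at most `exp (λ / 2)`. Multiplying over the rows bounds
`E exp (‖√Σ Y x‖₂² / (4B²))` by `exp (tr Σ / 2)`, and Markov's inequality concludes.
-/

open MeasureTheory ProbabilityTheory Real
open scoped ENNReal NNReal

lemma Real.inv_sqrt_one_sub_le_exp {a : ℝ} (ha0 : 0 ≤ a) (ha : a ≤ 1 / 2) :
    (√(1 - a))⁻¹ ≤ exp a := by
  have hexp : 1 + 2 * a ≤ exp (2 * a) := by linarith [add_one_le_exp (2 * a)]
  have hle : (1 - a)⁻¹ ≤ exp (2 * a) := by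
    rw [inv_le_iff_one_le_mul₀' (by linarith)]
    nlinarith
  calc (√(1 - a))⁻¹ = √((1 - a)⁻¹) := (sqrt_inv _).symm
    _ ≤ √(exp a ^ 2) := sqrt_le_sqrt (by rwa [← exp_nat_mul, Nat.cast_ofNat])
    _ = exp a := sqrt_sq (exp_pos a).le

lemma lintegral_exp_neg_mul_sq {k : ℝ} (hk : 0 < k) :
    ∫⁻ u : ℝ, ENNReal.ofReal (exp (-k * u ^ 2)) = ENNReal.ofReal (√(π / k)) := by
  rw [← ofReal_integral_eq_lintegral_ofReal (integrable_exp_neg_mul_sq hk)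
    (ae_of_all _ fun _ ↦ (exp_pos _).le), integral_gaussian]

lemma lintegral_exp_mul_sub_sq_div_two (a : ℝ) :
    ∫⁻ u : ℝ, ENNReal.ofReal (exp (a * u - u ^ 2 / 2)) =
      ENNReal.ofReal (exp (a ^ 2 / 2)) * ENNReal.ofReal (√(2 * π)) := by
  have hsq (u : ℝ) : exp (a * u - u ^ 2 / 2) = exp (a ^ 2 / 2) * exp (-(1 / 2) * (u - a) ^ 2) := by
    rw [← exp_add]; ring_nf
  simp_rw [hsq, ENNReal.ofReal_mul (exp_pos _).le]
  rw [lintegral_const_mul' _ _ ENNReal.ofReal_ne_top,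
    lintegral_sub_right_eq_self (fun u ↦ ENNReal.ofReal (exp (-(1 / 2) * u ^ 2))) a,
    lintegral_exp_neg_mul_sq (by norm_num)]
  norm_num [div_div_eq_mul_div, mul_comm]

lemma ProbabilityTheory.iIndepFun.curry {ι κ Ω 𝓧 : Type*} [MeasurableSpace Ω]
    [MeasurableSpace 𝓧] {P : Measure Ω} {X : ι → κ → Ω → 𝓧} (mX : ∀ i j, Measurable (X i j))
    (h : iIndepFun (fun p : ι × κ ↦ X p.1 p.2) P) :
    iIndepFun (fun i ω j ↦ X i j ω) P := by
  have := h.isProbabilityMeasure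
  have _ i j := Measure.isProbabilityMeasure_map (μ := P) (mX i j).aemeasurable
  have hrow i : P.map (fun ω j ↦ X i j ω) = Measure.infinitePi fun j ↦ P.map (X i j) :=
    (h.precomp (Prod.mk_right_injective i)).map_fun_eq_infinitePi_map (mX i)
  have hall : P.map (fun ω p ↦ X p.1 p.2 ω) =
      Measure.infinitePi fun p : ι × κ ↦ P.map (X p.1 p.2) :=
    h.map_fun_eq_infinitePi_map fun p ↦ mX p.1 p.2
  rw [iIndepFun_iff_map_fun_eq_infinitePi_map fun i ↦ measurable_pi_lambda _ (mX i), funext hrow,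
    ← Measure.infinitePi_map_curry, ← hall]
  exact (Measure.map_map (MeasurableEquiv.curry ι κ 𝓧).measurable
    (measurable_pi_lambda _ fun p : ι × κ ↦ mX p.1 p.2)).symm

section

variable {Ω : Type*} [MeasurableSpace Ω] {μ : Measure Ω}

lemma measure_ge_le_exp_neg_mul_lintegral_exp {Y : Ω → ℝ} (hY : AEMeasurable Y μ) (a : ℝ) :
    μ {ω | a ≤ Y ω} ≤ ENNReal.ofReal (exp (-a)) * ∫⁻ ω, ENNReal.ofReal (exp (Y ω)) ∂μ := by
  have hpos : ENNReal.ofReal (exp a) ≠ 0 := (ENNReal.ofReal_pos.2 (exp_pos a)).ne'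
  calc μ {ω | a ≤ Y ω} ≤ μ {ω | ENNReal.ofReal (exp a) ≤ ENNReal.ofReal (exp (Y ω))} :=
        measure_mono fun ω hω ↦ ENNReal.ofReal_le_ofReal (exp_le_exp.2 hω)
    _ ≤ (∫⁻ ω, ENNReal.ofReal (exp (Y ω)) ∂μ) / ENNReal.ofReal (exp a) :=
        meas_ge_le_lintegral_div (by fun_prop) hpos ENNReal.ofReal_ne_top
    _ = _ := by
        rw [div_eq_mul_inv, mul_comm, ← ENNReal.ofReal_inv_of_pos (exp_pos a), exp_neg]

lemma ProbabilityTheory.iIndepFun.lintegral_exp_sum {ι : Type*} {W : ι → Ω → ℝ}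
    (hW : iIndepFun W μ) (hmeas : ∀ i, Measurable (W i)) (s : Finset ι) :
    ∫⁻ ω, ENNReal.ofReal (exp (∑ i ∈ s, W i ω)) ∂μ =
      ∏ i ∈ s, ∫⁻ ω, ENNReal.ofReal (exp (W i ω)) ∂μ := by
  simp_rw [exp_sum, ENNReal.ofReal_prod_of_nonneg fun _ _ ↦ (exp_pos _).le]
  exact lintegral_prod_eq_prod_lintegral_of_indepFun s _
    (hW.comp (fun _ r ↦ ENNReal.ofReal (exp r)) fun _ ↦ by fun_prop) fun i ↦ by fun_prop

variable {X : Ω → ℝ} {c : ℝ≥0}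

lemma hasSubgaussianMGF_of_lintegral_exp_mul_le (hX : AEMeasurable X μ)
    (h : ∀ t, ∫⁻ ω, ENNReal.ofReal (exp (t * X ω)) ∂μ ≤ ENNReal.ofReal (exp (c * t ^ 2 / 2))) :
    HasSubgaussianMGF X c μ := by
  have hint t : Integrable (fun ω ↦ exp (t * X ω)) μ :=
    ⟨(hX.const_mul t).exp.aestronglyMeasurable,
      (hasFiniteIntegral_iff_ofReal (ae_of_all _ fun _ ↦ (exp_pos _).le)).2
        ((h t).trans_lt ENNReal.ofReal_lt_top)⟩
  refine ⟨hint, fun t ↦ ?_⟩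
  rw [mgf, integral_eq_lintegral_of_nonneg_ae (ae_of_all _ fun _ ↦ (exp_pos _).le)
    (hint t).aestronglyMeasurable]
  exact ENNReal.toReal_le_of_le_ofReal (exp_pos _).le (h t)

namespace ProbabilityTheory.HasSubgaussianMGF

lemma lintegral_exp_mul_le (h : HasSubgaussianMGF X c μ) (t : ℝ) :
    ∫⁻ ω, ENNReal.ofReal (exp (t * X ω)) ∂μ ≤ ENNReal.ofReal (exp (c * t ^ 2 / 2)) := by
  rw [← ofReal_integral_eq_lintegral_ofReal (h.integrable_exp_mul t)
    (ae_of_all _ fun _ ↦ (exp_pos _).le)]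
  exact ENNReal.ofReal_le_ofReal (h.mgf_le t)

lemma sum_mul_of_iIndepFun {ι : Type*} [Fintype ι] {Z : ι → Ω → ℝ} (hZ : iIndepFun Z μ)
    (h : ∀ j, HasSubgaussianMGF (Z j) c μ) {x : ι → ℝ} (hx : ∑ j, x j ^ 2 = 1) :
    HasSubgaussianMGF (fun ω ↦ ∑ j, Z j ω * x j) c μ := by
  have hc : ∑ j, (⟨x j ^ 2, sq_nonneg (x j)⟩ * c : ℝ≥0) = c := by
    refine NNReal.eq ?_
    rw [NNReal.coe_sum]
    change ∑ j, x j ^ 2 * (c : ℝ) = c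
    rw [← Finset.sum_mul, hx, one_mul]
  have hsum := sum_of_iIndepFun (s := Finset.univ)
    (hZ.comp (fun j r ↦ x j * r) fun _ ↦ measurable_const_mul _) fun j _ ↦ (h j).const_mul (x j)
  rw [hc] at hsum
  exact hsum.congr (ae_of_all _ fun ω ↦ Finset.sum_congr rfl fun j _ ↦ mul_comm _ _)

lemma lintegral_exp_mul_sq_le (h : HasSubgaussianMGF X c μ) {t : ℝ} (ht : 0 ≤ t)
    (hct : 2 * c * t < 1) :
    ∫⁻ ω, ENNReal.ofReal (exp (t * X ω ^ 2)) ∂μ ≤ ENNReal.ofReal (√(1 - 2 * c * t))⁻¹ := by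
  have : IsFiniteMeasure μ := by simpa [integrable_const_iff] using h.integrable_exp_mul 0
  set b := √(2 * t)
  have hb : b ^ 2 = 2 * t := sq_sqrt (by positivity)
  have hK : 0 < √(2 * π) := sqrt_pos.2 (by positivity)
  have hgauss (v : ℝ) : ENNReal.ofReal (exp (t * v ^ 2)) * ENNReal.ofReal (√(2 * π)) =
      ∫⁻ u : ℝ, ENNReal.ofReal (exp (b * v * u - u ^ 2 / 2)) := by
    rw [lintegral_exp_mul_sub_sq_div_two]
    congr 3
    linear_combination (-v ^ 2 / 2) * hb
  have hinner (u : ℝ) : ∫⁻ ω, ENNReal.ofReal (exp (b * X ω * u - u ^ 2 / 2)) ∂μ ≤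
      ENNReal.ofReal (exp (-((1 - 2 * c * t) / 2) * u ^ 2)) := by
    have hsplit (ω : Ω) : ENNReal.ofReal (exp (b * X ω * u - u ^ 2 / 2)) =
        ENNReal.ofReal (exp (b * u * X ω)) * ENNReal.ofReal (exp (-(u ^ 2 / 2))) := by
      rw [← ENNReal.ofReal_mul (exp_pos _).le, ← exp_add]; ring_nf
    simp_rw [hsplit]
    rw [lintegral_mul_const' _ _ ENNReal.ofReal_ne_top]
    refine (mul_le_mul_left (h.lintegral_exp_mul_le (b * u)) _).trans_eq ?_
    rw [← ENNReal.ofReal_mul (exp_pos _).le, ← exp_add]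
    congr 2
    linear_combination (c * u ^ 2 / 2) * hb
  have hmeas : AEMeasurable (Function.uncurry fun ω u ↦
      ENNReal.ofReal (exp (b * X ω * u - u ^ 2 / 2))) (μ.prod volume) := by
    have := h.aemeasurable
    fun_prop
  rw [← ENNReal.mul_le_mul_iff_left (ENNReal.ofReal_pos.2 hK).ne' ENNReal.ofReal_ne_top]
  calc (∫⁻ ω, ENNReal.ofReal (exp (t * X ω ^ 2)) ∂μ) * ENNReal.ofReal (√(2 * π))
      = ∫⁻ ω, (∫⁻ u : ℝ, ENNReal.ofReal (exp (b * X ω * u - u ^ 2 / 2))) ∂μ := by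
        rw [← lintegral_mul_const' _ _ ENNReal.ofReal_ne_top]
        simp_rw [hgauss]
    _ = ∫⁻ u : ℝ, ∫⁻ ω, ENNReal.ofReal (exp (b * X ω * u - u ^ 2 / 2)) ∂μ :=
        lintegral_lintegral_swap hmeas
    _ ≤ ∫⁻ u : ℝ, ENNReal.ofReal (exp (-((1 - 2 * c * t) / 2) * u ^ 2)) := lintegral_mono hinner
    _ = ENNReal.ofReal (√(1 - 2 * c * t))⁻¹ * ENNReal.ofReal (√(2 * π)) := by
        rw [lintegral_exp_neg_mul_sq (by linarith), ← ENNReal.ofReal_mul (by positivity)]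
        congr 1
        rw [← div_eq_inv_mul, ← sqrt_div' _ (by linarith : (0 : ℝ) ≤ 1 - 2 * c * t)]
        congr 1
        field_simp

lemma lintegral_exp_mul_sq_div_le (h : HasSubgaussianMGF X c μ) (hc : 0 < c) {a : ℝ}
    (ha0 : 0 ≤ a) (ha1 : a ≤ 1) :
    ∫⁻ ω, ENNReal.ofReal (exp (a * X ω ^ 2 / (4 * c))) ∂μ ≤ ENNReal.ofReal (exp (a / 2)) := by
  have hc' : (0 : ℝ) < c := hc
  have ht : 2 * c * (a / (4 * c)) = a / 2 := by field_simp; ring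
  simp_rw [mul_div_right_comm a]
  refine (h.lintegral_exp_mul_sq_le (by positivity) (by linarith)).trans
    (ENNReal.ofReal_le_ofReal ?_)
  rw [ht]
  exact inv_sqrt_one_sub_le_exp (by positivity) (by linarith)

end ProbabilityTheory.HasSubgaussianMGF

end

theorem vector_tail_bound_subgaussian_general
    (d m : ℕ) (B : ℝ) (hB : 0 < B)
    (Ω : Type*) [MeasurableSpace Ω] (μ : Measure Ω) [IsProbabilityMeasure μ]
    (Y : Fin d → Fin m → Ω → ℝ)
    (hmeas : ∀ i j, Measurable (Y i j))
    (hindep : iIndepFun (fun p : Fin d × Fin m => Y p.1 p.2) μ)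
    (hsub : ∀ i j (s : ℝ), ∫⁻ ω, ENNReal.ofReal (Real.exp (s * Y i j ω)) ∂μ ≤
      ENNReal.ofReal (Real.exp (B ^ 2 * s ^ 2 / 2)))
    (lam : Fin d → ℝ) (hlam : ∀ i, lam i ∈ Set.Icc (0 : ℝ) 1)
    (x : Fin m → ℝ) (hx : ∑ j, (x j) ^ 2 = 1)
    (z : ℝ) (hz : 0 ≤ z) :
    μ {ω : Ω | z ≤ Real.sqrt (∑ i, lam i * (∑ j, Y i j ω * x j) ^ 2)} ≤
      ENNReal.ofReal (Real.exp ((∑ i, lam i) / 2 - z ^ 2 / (4 * B ^ 2))) := by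
  set V : Fin d → Ω → ℝ := fun i ω ↦ ∑ j, Y i j ω * x j
  have hV_indep : iIndepFun V μ :=
    (hindep.curry hmeas).comp (fun _ r ↦ ∑ j, r j * x j) fun _ ↦ by fun_prop
  have hV_subG i : HasSubgaussianMGF (V i) ⟨B ^ 2, sq_nonneg B⟩ μ :=
    .sum_mul_of_iIndepFun (hindep.precomp (Prod.mk_right_injective i)) (fun j ↦
      hasSubgaussianMGF_of_lintegral_exp_mul_le (c := ⟨B ^ 2, sq_nonneg B⟩)
        (hmeas i j).aemeasurable (hsub i j)) hx
  have hW_indep : iIndepFun (fun i ω ↦ lam i * V i ω ^ 2 / (4 * B ^ 2)) μ :=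
    hV_indep.comp (fun i r ↦ lam i * r ^ 2 / (4 * B ^ 2)) fun _ ↦ by fun_prop
  have hmgf : ∫⁻ ω, ENNReal.ofReal (exp (∑ i, lam i * V i ω ^ 2 / (4 * B ^ 2))) ∂μ ≤
      ENNReal.ofReal (exp ((∑ i, lam i) / 2)) := by
    rw [hW_indep.lintegral_exp_sum (fun _ ↦ by fun_prop), Finset.sum_div, exp_sum,
      ENNReal.ofReal_prod_of_nonneg fun _ _ ↦ (exp_pos _).le]
    exact Finset.prod_le_prod' fun i _ ↦ (hV_subG i).lintegral_exp_mul_sq_div_le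
      (NNReal.coe_pos.1 (pow_pos hB 2)) (hlam i).1 (hlam i).2
  calc μ {ω | z ≤ √(∑ i, lam i * V i ω ^ 2)}
      ≤ μ {ω | z ^ 2 / (4 * B ^ 2) ≤ ∑ i, lam i * V i ω ^ 2 / (4 * B ^ 2)} := by
        refine measure_mono fun ω hω ↦ ?_
        rw [Set.mem_ofPred_eq, ← Finset.sum_div]
        gcongr
        exact (Real.le_sqrt hz (Finset.sum_nonneg fun i _ ↦
          mul_nonneg (hlam i).1 (sq_nonneg _))).1 hω
    _ ≤ ENNReal.ofReal (exp (-(z ^ 2 / (4 * B ^ 2)))) *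
          ∫⁻ ω, ENNReal.ofReal (exp (∑ i, lam i * V i ω ^ 2 / (4 * B ^ 2))) ∂μ :=
        measure_ge_le_exp_neg_mul_lintegral_exp (by fun_prop) _
    _ ≤ ENNReal.ofReal (exp (-(z ^ 2 / (4 * B ^ 2)))) *
          ENNReal.ofReal (exp ((∑ i, lam i) / 2)) := by
        gcongr
    _ = ENNReal.ofReal (exp ((∑ i, lam i) / 2 - z ^ 2 / (4 * B ^ 2))) := by
        rw [← ENNReal.ofReal_mul (exp_pos _).le, ← exp_add, neg_add_eq_sub]

/-- If `Y` is a `d × m` random matrix (`m ≤ d`) with independent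
entries, each sub-Gaussian with moment `B`, `Σ = diag(λ)` diagonal PSD with
`Σ ≤ I`, and `x ∈ ℝ^m` a unit vector, then for all `z ≥ 0`,
`P[‖√Σ Y x‖ ≥ z] ≤ exp(trace(Σ)/2 − z²/(4B²))`. -/
theorem vector_tail_bound_subgaussian
    (d m : ℕ) (hm : 0 < m) (hmd : m ≤ d) (B : ℝ) (hB : 0 < B)
    (Ω : Type*) [MeasurableSpace Ω] (μ : Measure Ω) [IsProbabilityMeasure μ]
    (Y : Fin d → Fin m → Ω → ℝ)
    (hmeas : ∀ i j, Measurable (Y i j))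
    (hindep : iIndepFun (fun p : Fin d × Fin m => Y p.1 p.2) μ)
    (hsub : ∀ i j (s : ℝ), ∫⁻ ω, ENNReal.ofReal (Real.exp (s * Y i j ω)) ∂μ ≤
      ENNReal.ofReal (Real.exp (B ^ 2 * s ^ 2 / 2)))
    (lam : Fin d → ℝ) (hlam : ∀ i, lam i ∈ Set.Icc (0 : ℝ) 1)
    (x : Fin m → ℝ) (hx : ∑ j, (x j) ^ 2 = 1)
    (z : ℝ) (hz : 0 ≤ z) :
    μ {ω : Ω | z ≤ Real.sqrt (∑ i, lam i * (∑ j, Y i j ω * x j) ^ 2)} ≤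
      ENNReal.ofReal (Real.exp ((∑ i, lam i) / 2 - z ^ 2 / (4 * B ^ 2))) :=
  vector_tail_bound_subgaussian_general d m B hB Ω μ Y hmeas hindep hsub lam hlam x hx z hz
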